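/- arXiv:1706.04703 — 7 statements merged into one kernel-verified Lean document; each statement's English description precedes it below -/
import Mathlib

section
/- Every (n₁,…,n_m)-homogeneous polynomial P : E^m → F is an M-homogeneous polynomial on the product space E^m, where M = n₁+⋯+n_m; that is, there exists an M-linear map A : (E^m)^M → F such that P(z) = A(z,…,z) for every z = (x₁,…,x_m) ∈ E^m. -/
open scoped BigOperators

/-- `P : E → F` is an `m`-homogeneous polynomial if there is an `m`-linear map
`A : E^m → F` with `P x = A (x, …, x)` for all `x`. -/
def IsHomogPoly (𝕂 : Type*) [RCLike 𝕂] {E F : Type*} [AddCommGroup E] [Module 𝕂 E]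
    [AddCommGroup F] [Module 𝕂 F] (m : ℕ) (P : E → F) : Prop :=
  ∃ A : MultilinearMap 𝕂 (fun _ : Fin m => E) F, ∀ x, P x = A fun _ => x

/-- `P : E^m → F` is an `(n 0, …, n (m-1))`-homogeneous polynomial (multipolynomial) if,
for each `j`, the map `x ↦ P (x₁, …, x_{j-1}, x, x_{j+1}, …, x_m)` is an `n j`-homogeneous
polynomial when the remaining variables are kept fixed. -/
def IsMultiPoly (𝕂 : Type*) [RCLike 𝕂] {E F : Type*} [AddCommGroup E] [Module 𝕂 E]
    [AddCommGroup F] [Module 𝕂 F] {m : ℕ} (n : Fin m → ℕ) (P : (Fin m → E) → F) : Prop :=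
  ∀ (j : Fin m) (x : Fin m → E), IsHomogPoly 𝕂 (n j) fun y => P (Function.update x j y)

/-!
An `n`-homogeneous polynomial `P` is recovered on the diagonal from its polarization
`y ↦ (n!)⁻¹ • ∑_T (-1)^|T| • P (∑_{i ∉ T} y i)`, a multilinear map that depends linearly on `P`.
If `P (x, w)` on `E × G` is `a`-homogeneous in `x` and `b`-homogeneous in `w`, polarize it in both
variables: for fixed `w`-arguments the result is the polarization of an `a`-homogeneous
polynomial in `x`, and since the two polarizations commute, symmetrically for fixed
`x`-arguments. This gives a map multilinear in `a + b` arguments whose diagonal is `P`.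
Writing `E^(m+1) = E^m × E`, the theorem follows by induction on `m`.
-/

open Finset Function
open scoped Nat

theorem Finset.sum_neg_one_pow_card_filter_disjoint {R α : Type*} [CommRing R] [Fintype α]
    [DecidableEq α] (s : Finset α) :
    ∑ T ∈ univ.filter (Disjoint s), (-1 : R) ^ #T = if s = univ then 1 else 0 := by
  have hfilter : univ.filter (Disjoint s) = sᶜ.powerset := by
    ext T; simp [subset_compl_iff_disjoint_left]
  simp only [hfilter, ← compl_eq_empty_iff]
  exact_mod_cast congrArg (Int.cast : ℤ → R) sum_powerset_neg_one_pow_card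

theorem Finset.image_univ_eq_univ_iff {α β : Type*} [Fintype α] [Fintype β] [DecidableEq α]
    {f : β → α} :
    univ.image f = univ ↔ Surjective f := by
  simp [eq_univ_iff_forall, Surjective]

theorem MultilinearMap.exists_curried_of_separately {R ι κ M₁ M₂ N : Type*} [CommSemiring R]
    [AddCommMonoid M₁] [Module R M₁] [AddCommMonoid M₂] [Module R M₂]
    [AddCommMonoid N] [Module R N] (f : (ι → M₁) → (κ → M₂) → N)
    (h₁ : ∀ y, ∃ A : MultilinearMap R (fun _ : ι => M₁) N, ⇑A = fun x => f x y)
    (h₂ : ∀ x, ∃ B : MultilinearMap R (fun _ : κ => M₂) N, ⇑B = f x) :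
    ∃ C : MultilinearMap R (fun _ : ι => M₁) (MultilinearMap R (fun _ : κ => M₂) N),
      ∀ x y, C x y = f x y := by
  choose B hB using h₂
  choose A hA using h₁
  have hAB : ∀ x y, B x y = A y x := fun x y => by rw [hB, hA]
  refine ⟨{ toFun := B, map_update_add' := ?_, map_update_smul' := ?_ },
    fun x y => congrFun (hB x) y⟩
  · intro _ x i a b; ext y; simp [hAB]
  · intro _ x i c a; ext y; simp [hAB]

section Polarization

variable {𝕂 : Type*} [Field 𝕂] {E F : Type*} [AddCommMonoid E] [AddCommMonoid F] [Module 𝕂 F]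

variable (𝕂) in
noncomputable def polarize (n : ℕ) : (E → F) →ₗ[𝕂] (Fin n → E) → F where
  toFun P y := (n ! : 𝕂)⁻¹ • ∑ T : Finset (Fin n), (-1 : 𝕂) ^ #T • P (∑ i ∈ Tᶜ, y i)
  map_add' P Q := by ext y; simp [smul_add, sum_add_distrib]
  map_smul' c P := by ext y; simp [smul_sum, smul_comm c]

theorem polarize_apply (n : ℕ) (P : E → F) (y : Fin n → E) :
    polarize 𝕂 n P y = (n ! : 𝕂)⁻¹ • ∑ T : Finset (Fin n), (-1 : 𝕂) ^ #T • P (∑ i ∈ Tᶜ, y i) :=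
  rfl

theorem polarize_comm {E' : Type*} [AddCommMonoid E'] {a b : ℕ} (G : E → E' → F)
    (x : Fin a → E) (y : Fin b → E') :
    polarize 𝕂 a (fun x' => polarize 𝕂 b (G x') y) x =
      polarize 𝕂 b (fun y' => polarize 𝕂 a (fun x' => G x' y') x) y := by
  simp only [polarize_apply, smul_sum, smul_smul]
  rw [sum_comm]
  refine sum_congr rfl fun _ _ => sum_congr rfl fun _ _ => ?_
  congr 1
  ring

variable [Module 𝕂 E]

theorem MultilinearMap.polarize_diag_eq_sum_perm {n : ℕ}
    (A : MultilinearMap 𝕂 (fun _ : Fin n => E) F) (y : Fin n → E) :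
    polarize 𝕂 n (fun x => A fun _ => x) y =
      (n ! : 𝕂)⁻¹ • ∑ σ : Equiv.Perm (Fin n), A (y ∘ σ) := by
  rw [polarize_apply]
  congr 1
  calc ∑ T : Finset (Fin n), (-1 : 𝕂) ^ #T • A (fun _ => ∑ i ∈ Tᶜ, y i)
      = ∑ T : Finset (Fin n), ∑ r ∈ Fintype.piFinset fun _ => Tᶜ,
          (-1 : 𝕂) ^ #T • A (y ∘ r) := by
        simp_rw [A.map_sum_finset, smul_sum]; rfl
    _ = ∑ r : Fin n → Fin n, ∑ T ∈ univ.filter (Disjoint (univ.image r)),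
          (-1 : 𝕂) ^ #T • A (y ∘ r) :=
        sum_comm' fun T r => by simp [Fintype.mem_piFinset, disjoint_left]
    _ = ∑ r : Fin n → Fin n, if Surjective r then A (y ∘ r) else 0 := by
        simp_rw [← sum_smul, sum_neg_one_pow_card_filter_disjoint, image_univ_eq_univ_iff]
        simp [ite_smul]
    _ = ∑ σ : Equiv.Perm (Fin n), A (y ∘ σ) := by
        simp_rw [Finite.surjective_iff_bijective]
        rw [← sum_filter, sum_subtype _ (p := Bijective) (by simp)]
        exact Fintype.sum_equiv Equiv.bijectiveEquiv _ _ fun _ => rfl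

theorem MultilinearMap.exists_coe_eq_polarize {n : ℕ}
    (A : MultilinearMap 𝕂 (fun _ : Fin n => E) F) :
    ∃ S : MultilinearMap 𝕂 (fun _ : Fin n => E) F, ⇑S = polarize 𝕂 n fun x => A fun _ => x :=
  ⟨(n ! : 𝕂)⁻¹ • ∑ σ : Equiv.Perm (Fin n), A.domDomCongr σ, funext fun y => by
    simp [A.polarize_diag_eq_sum_perm, comp_def]⟩

theorem MultilinearMap.polarize_diag [CharZero 𝕂] {n : ℕ}
    (A : MultilinearMap 𝕂 (fun _ : Fin n => E) F) (x : E) :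
    polarize 𝕂 n (fun x => A fun _ => x) (fun _ => x) = A fun _ => x := by
  rw [A.polarize_diag_eq_sum_perm]
  simp [comp_def, ← Nat.cast_smul_eq_nsmul 𝕂, smul_smul, Fintype.card_perm,
    Nat.factorial_ne_zero]

end Polarization

section HomogeneousPolynomial

variable {𝕂 : Type*} [RCLike 𝕂] {E F G : Type*} [AddCommGroup E] [Module 𝕂 E]
  [AddCommGroup F] [Module 𝕂 F] [AddCommGroup G] [Module 𝕂 G]

theorem isHomogPoly_const (c : F) : IsHomogPoly 𝕂 0 fun _ : E => c :=
  ⟨MultilinearMap.constOfIsEmpty 𝕂 _ c, fun _ => rfl⟩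

theorem IsHomogPoly.comp_linearMap {n : ℕ} {P : E → F} (h : IsHomogPoly 𝕂 n P)
    (L : G →ₗ[𝕂] E) : IsHomogPoly 𝕂 n (P ∘ L) := by
  obtain ⟨A, hA⟩ := h
  exact ⟨A.compLinearMap fun _ => L, fun z => hA (L z)⟩

theorem IsHomogPoly.linearMap_comp {n : ℕ} {P : E → F} (h : IsHomogPoly 𝕂 n P)
    (L : F →ₗ[𝕂] G) : IsHomogPoly 𝕂 n (L ∘ P) := by
  obtain ⟨A, hA⟩ := h
  exact ⟨L.compMultilinearMap A, fun x => congrArg L (hA x)⟩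

theorem isHomogPoly_pi {ι : Type*} {n : ℕ} {P : E → ι → F}
    (h : ∀ i, IsHomogPoly 𝕂 n fun x => P x i) : IsHomogPoly 𝕂 n P := by
  choose A hA using h
  exact ⟨MultilinearMap.pi A, fun x => funext fun i => hA i x⟩

theorem IsHomogPoly.exists_coe_eq_polarize {n : ℕ} {P : E → F} (h : IsHomogPoly 𝕂 n P) :
    ∃ S : MultilinearMap 𝕂 (fun _ : Fin n => E) F, ⇑S = polarize 𝕂 n P := by
  obtain ⟨A, hA⟩ := h
  rw [funext hA]
  exact A.exists_coe_eq_polarize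

theorem IsHomogPoly.polarize_diag {n : ℕ} {P : E → F} (h : IsHomogPoly 𝕂 n P) (x : E) :
    polarize 𝕂 n P (fun _ => x) = P x := by
  obtain ⟨A, hA⟩ := h
  rw [funext hA]
  exact A.polarize_diag x

theorem isHomogPoly_polarize_apply {W : Type*} [AddCommMonoid W] {d e : ℕ} {P : E → W → F}
    (h : ∀ w, IsHomogPoly 𝕂 d fun x => P x w) (y : Fin e → W) :
    IsHomogPoly 𝕂 d fun x => polarize 𝕂 e (P x) y :=
  (isHomogPoly_pi h).linearMap_comp ((LinearMap.proj y).comp (polarize 𝕂 e))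

theorem isHomogPoly_of_curried {a b : ℕ}
    (B : MultilinearMap 𝕂 (fun _ : Fin a => E) (MultilinearMap 𝕂 (fun _ : Fin b => G) F)) :
    IsHomogPoly 𝕂 (a + b) fun p : E × G => B (fun _ => p.1) (fun _ => p.2) := by
  let B' := (MultilinearMap.compLinearMapₗ fun _ => LinearMap.snd 𝕂 E G).compMultilinearMap
    (B.compLinearMap fun _ => LinearMap.fst 𝕂 E G)
  exact ⟨B'.uncurrySum.domDomCongr finSumFinEquiv, fun _ => rfl⟩

theorem isHomogPoly_prod_of_separately {a b : ℕ} {P : E → G → F}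
    (h₁ : ∀ w, IsHomogPoly 𝕂 a fun x => P x w) (h₂ : ∀ x, IsHomogPoly 𝕂 b (P x)) :
    IsHomogPoly 𝕂 (a + b) fun p : E × G => P p.1 p.2 := by
  obtain ⟨B, hB⟩ := MultilinearMap.exists_curried_of_separately
    (fun x y => polarize 𝕂 a (fun x' => polarize 𝕂 b (P x') y) x)
    (fun y => (isHomogPoly_polarize_apply h₁ y).exists_coe_eq_polarize)
    (fun x => by
      simp_rw [polarize_comm P x]
      exact (isHomogPoly_polarize_apply (P := fun y x => P x y) h₂ x).exists_coe_eq_polarize)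
  convert isHomogPoly_of_curried B using 2 with p
  rw [hB, (isHomogPoly_polarize_apply h₁ _).polarize_diag, (h₂ p.1).polarize_diag]

end HomogeneousPolynomial

section MultiPoly

variable {𝕂 : Type*} [RCLike 𝕂] {E F : Type*} [AddCommGroup E] [Module 𝕂 E]
  [AddCommGroup F] [Module 𝕂 F]

theorem IsMultiPoly.snoc {m : ℕ} {n : Fin (m + 1) → ℕ} {P : (Fin (m + 1) → E) → F}
    (hP : IsMultiPoly 𝕂 n P) (w : E) :
    IsMultiPoly 𝕂 (fun j => n j.castSucc) fun x => P (Fin.snoc x w) := by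
  intro j x
  simpa only [Fin.snoc_update] using hP j.castSucc (Fin.snoc x w)

theorem IsMultiPoly.isHomogPoly_snoc {m : ℕ} {n : Fin (m + 1) → ℕ}
    {P : (Fin (m + 1) → E) → F} (hP : IsMultiPoly 𝕂 n P) (x : Fin m → E) :
    IsHomogPoly 𝕂 (n (Fin.last m)) fun w => P (Fin.snoc x w) := by
  simpa only [Fin.update_snoc_last] using hP (Fin.last m) (Fin.snoc x 0)

theorem IsMultiPoly.isHomogPoly {m : ℕ} {n : Fin m → ℕ} {P : (Fin m → E) → F}
    (hP : IsMultiPoly 𝕂 n P) : IsHomogPoly 𝕂 (∑ j, n j) P := by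
  induction m with
  | zero =>
    rw [show P = fun _ => P 0 from funext fun _ => congrArg P (Subsingleton.elim _ _)]
    exact isHomogPoly_const _
  | succ m ih =>
    have hsplit := (isHomogPoly_prod_of_separately (fun w => ih (hP.snoc w))
      hP.isHomogPoly_snoc).comp_linearMap
        ((LinearMap.funLeft 𝕂 E Fin.castSucc).prod (LinearMap.proj (Fin.last m)))
    rw [Fin.sum_univ_castSucc]
    convert hsplit using 1
    exact funext fun z => congrArg P (Fin.snoc_init_self z).symm

end MultiPoly

/-- Every `(n₁, …, n_m)`-homogeneous polynomial `P : E^m → F` is an `M`-homogeneous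
polynomial on the product space `E^m`, where `M = n₁ + ⋯ + n_m`. -/
theorem multipoly_isHomogPoly {𝕂 : Type*} [RCLike 𝕂] {E F : Type*}
    [AddCommGroup E] [Module 𝕂 E] [AddCommGroup F] [Module 𝕂 F]
    {m : ℕ} (n : Fin m → ℕ) (P : (Fin m → E) → F) (hP : IsMultiPoly 𝕂 n P) :
    ∃ A : MultilinearMap 𝕂 (fun _ : Fin (∑ j, n j) => (Fin m → E)) F,
      ∀ z : Fin m → E, P z = A fun _ => z :=
  hP.isHomogPoly
end

section
/- Every (k,m)-linear mapping is a km-homogeneous polynomial: if P : E^k → F is an (m,…,m)-homogeneous polynomial (m repeated k times), then there exists a km-linear map A : (E^k)^{km} → F such that P(z) = A(z,…,z) for every z ∈ E^k. -/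
open scoped BigOperators

/-!
Polarize in every variable at once. For an `m`-homogeneous `Q = A ∘ diag`, the alternating sum
`∑_{S ⊆ {1,…,m}} (-1)^(m-|S|) Q (∑_{i ∈ S} aᵢ)` equals `∑_σ A (a ∘ σ)`, so it is multilinear in
`a` and equals `m! Q x` on the diagonal. For a multipolynomial `P` of degrees `n₁, …, n_k`, the
analogous sum over `S₁ × ⋯ × S_k` is a function of `∑ⱼ nⱼ` arguments grouped in blocks; with all
blocks but the `j`-th fixed it is a combination of polarizations of `P` in its `j`-th variable,
hence it is multilinear. On the block diagonal it equals `(∏ⱼ nⱼ!) P`, by homogeneity in each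
variable and `∑_S (-1)^(m-|S|) |S|^m = m!`. Composing with the coordinate projections `E^k → E`
and dividing by `∏ⱼ nⱼ!` gives the required `(∑ⱼ nⱼ)`-linear map on `E^k`.
-/

open Finset Function
open scoped Nat

theorem sum_superset_neg_one_pow {α : Type*} [Fintype α] [DecidableEq α] (T : Finset α) :
    ∑ S with T ⊆ S, (-1 : ℤ) ^ (Fintype.card α - #S) = if T = univ then 1 else 0 := by
  simp only [← compl_eq_empty_iff]
  rw [← sum_powerset_neg_one_pow_card]
  refine sum_nbij' (fun S => Sᶜ) (fun U => Uᶜ) ?_ ?_ (fun S _ => compl_compl S)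
    (fun U _ => compl_compl U) fun S _ => ?_
  · intro S hS
    simpa using hS
  · intro U hU
    simpa [subset_compl_comm] using hU
  · rw [card_compl]

section Polarization

variable {R E F : Type*} [CommSemiring R] [AddCommMonoid E] [Module R E] [AddCommGroup F]
  [Module R F]

def polarization (m : ℕ) (Q : E → F) (a : Fin m → E) : F :=
  ∑ S : Finset (Fin m), (-1 : ℤ) ^ (m - #S) • Q (∑ i ∈ S, a i)

theorem polarization_eq_sum_perm {m : ℕ} (A : MultilinearMap R (fun _ : Fin m => E) F)
    (a : Fin m → E) :
    polarization m (fun x => A fun _ => x) a = ∑ σ : Equiv.Perm (Fin m), A (a ∘ σ) := by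
  have expand : ∀ S : Finset (Fin m),
      (A fun _ => ∑ i ∈ S, a i) = ∑ r : Fin m → Fin m, if ∀ i, r i ∈ S then A (a ∘ r) else 0 := by
    intro S
    rw [A.map_sum_finset, ← sum_filter]
    congr 1
    ext r
    simp [Fintype.mem_piFinset]
  have coeff : ∀ r : Fin m → Fin m,
      ∑ S : Finset (Fin m), (-1 : ℤ) ^ (m - #S) • (if ∀ i, r i ∈ S then A (a ∘ r) else 0)
        = if Bijective r then A (a ∘ r) else 0 := by
    intro r
    have h := sum_superset_neg_one_pow (univ.image r)
    simp only [Fintype.card_fin, image_subset_iff, mem_univ, forall_const] at h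
    simp_rw [smul_ite, smul_zero, ← sum_filter, ← sum_smul, h, ite_smul, one_smul, zero_smul,
      ← Finite.surjective_iff_bijective]
    congr 1
    simp [eq_univ_iff_forall, Surjective]
  unfold polarization
  simp_rw [expand, smul_sum]
  rw [sum_comm]
  simp_rw [coeff]
  rw [← sum_filter]
  symm
  refine sum_bij (fun (σ : Equiv.Perm (Fin m)) _ => ⇑σ)
    (fun σ _ => mem_filter.2 ⟨mem_univ _, σ.bijective⟩) (fun σ _ τ _ h => Equiv.coe_fn_injective h)
    (fun r hr => ?_) fun _ _ => rfl
  exact ⟨Equiv.ofBijective r (mem_filter.1 hr).2, mem_univ _, rfl⟩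

theorem polarization_diag {m : ℕ} (A : MultilinearMap R (fun _ : Fin m => E) F) (x : E) :
    polarization m (fun x => A fun _ => x) (fun _ => x) = m ! • A (fun _ => x) := by
  simp [polarization_eq_sum_perm, comp_def, Fintype.card_perm]

variable {k : ℕ} {n : Fin k → ℕ}

def blockSum (S : ∀ j, Finset (Fin (n j))) (x : (Σ j, Fin (n j)) → E) (j : Fin k) : E :=
  ∑ i ∈ S j, x ⟨j, i⟩

def multiPolarization (n : Fin k → ℕ) (P : (Fin k → E) → F) (x : (Σ j, Fin (n j)) → E) : F :=
  ∑ S : ∀ j, Finset (Fin (n j)), (∏ j, (-1 : ℤ) ^ (n j - #(S j))) • P (blockSum S x)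

theorem blockSum_piSplitAt_symm (j₀ : Fin k) (T : Finset (Fin (n j₀)))
    (S' : ∀ j : {j // j ≠ j₀}, Finset (Fin (n j))) (x : (Σ j, Fin (n j)) → E) :
    blockSum ((Equiv.piSplitAt j₀ _).symm (T, S')) x
      = update (blockSum ((Equiv.piSplitAt j₀ _).symm (∅, S')) x) j₀ (∑ i ∈ T, x ⟨j₀, i⟩) := by
  funext j
  by_cases h : j = j₀
  · subst h
    simp [blockSum]
  · simp [blockSum, h]

theorem blockSum_update_of_eq_empty [DecidableEq (Σ j, Fin (n j))] {S : ∀ j, Finset (Fin (n j))}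
    {j₀ : Fin k} (hS : S j₀ = ∅) (x : (Σ j, Fin (n j)) → E) (i₀ : Fin (n j₀)) (v : E) :
    blockSum S (update x ⟨j₀, i₀⟩ v) = blockSum S x := by
  funext j
  by_cases h : j = j₀
  · subst h
    simp [blockSum, hS]
  · refine sum_congr rfl fun i _ => update_of_ne ?_ _ _
    simp [h]

theorem multiPolarization_eq_sum_polarization (P : (Fin k → E) → F) (j₀ : Fin k)
    (x : (Σ j, Fin (n j)) → E) :
    multiPolarization n P x = ∑ S' : ∀ j : {j // j ≠ j₀}, Finset (Fin (n j)),
      (∏ j : {j // j ≠ j₀}, (-1 : ℤ) ^ (n j - #(S' j))) •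
        polarization (n j₀)
          (fun y => P (update (blockSum ((Equiv.piSplitAt j₀ _).symm (∅, S')) x) j₀ y))
          (fun i => x ⟨j₀, i⟩) := by
  unfold multiPolarization polarization
  rw [← (Equiv.piSplitAt j₀ _).symm.sum_comp, Fintype.sum_prod_type_right]
  refine sum_congr rfl fun S' _ => ?_
  rw [smul_sum]
  refine sum_congr rfl fun T _ => ?_
  rw [Fintype.prod_eq_mul_prod_subtype_ne _ j₀, mul_comm, mul_smul, blockSum_piSplitAt_symm]
  congr 1
  · exact prod_congr rfl fun j _ => by simp [j.2]
  · simp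

theorem multiPolarization_update [DecidableEq (Σ j, Fin (n j))] (P : (Fin k → E) → F)
    (x : (Σ j, Fin (n j)) → E) (j₀ : Fin k) (i₀ : Fin (n j₀)) (v : E) :
    multiPolarization n P (update x ⟨j₀, i₀⟩ v) = ∑ S' : ∀ j : {j // j ≠ j₀}, Finset (Fin (n j)),
      (∏ j : {j // j ≠ j₀}, (-1 : ℤ) ^ (n j - #(S' j))) •
        polarization (n j₀)
          (fun y => P (update (blockSum ((Equiv.piSplitAt j₀ _).symm (∅, S')) x) j₀ y))
          (update (fun i => x ⟨j₀, i⟩) i₀ v) := by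
  rw [multiPolarization_eq_sum_polarization P j₀]
  refine sum_congr rfl fun S' _ => ?_
  rw [blockSum_update_of_eq_empty (by simp)]
  exact congrArg _ (congrArg _ (update_comp_eq_of_injective x sigma_mk_injective i₀ v))

end Polarization

theorem sum_neg_one_pow_mul_card_pow (m : ℕ) :
    ∑ S : Finset (Fin m), (-1 : ℤ) ^ (m - #S) * #S ^ m = m ! := by
  simpa [polarization] using polarization_diag (MultilinearMap.mkPiAlgebra ℤ (Fin m) ℤ) 1

section Homogeneous

variable {𝕂 E F : Type*} [RCLike 𝕂] [AddCommGroup E] [Module 𝕂 E] [AddCommGroup F] [Module 𝕂 F]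

namespace IsHomogPoly

variable {m : ℕ} {Q : E → F}

theorem map_smul (hQ : IsHomogPoly 𝕂 m Q) (c : 𝕂) (x : E) : Q (c • x) = c ^ m • Q x := by
  obtain ⟨A, hA⟩ := hQ
  simp [hA, A.map_smul_univ (fun _ => c) (fun _ => x)]

theorem exists_multilinearMap_eq_polarization (hQ : IsHomogPoly 𝕂 m Q) :
    ∃ B : MultilinearMap 𝕂 (fun _ : Fin m => E) F, ∀ a, B a = polarization m Q a := by
  obtain ⟨A, hA⟩ := hQ
  obtain rfl : Q = fun x => A fun _ => x := funext hA
  exact ⟨∑ σ : Equiv.Perm (Fin m), A.domDomCongr σ, fun a => by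
    simp [polarization_eq_sum_perm, comp_def]⟩

end IsHomogPoly

namespace IsMultiPoly

variable {k : ℕ} {n : Fin k → ℕ} {P : (Fin k → E) → F}

theorem map_smul (hP : IsMultiPoly 𝕂 n P) (c : Fin k → 𝕂) (z : Fin k → E) :
    P (fun j => c j • z j) = (∏ j, c j ^ n j) • P z := by
  suffices h : ∀ s : Finset (Fin k),
      P (s.piecewise (fun j => c j • z j) z) = (∏ j ∈ s, c j ^ n j) • P z by
    simpa using h univ
  intro s
  induction s using Finset.induction_on with
  | empty => simp
  | insert j s hj ih =>
    have hzj : s.piecewise (fun j => c j • z j) z j = z j := piecewise_eq_of_notMem _ _ _ hj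
    rw [piecewise_insert, (hP j _).map_smul, ← hzj, update_eq_self, ih, prod_insert hj,
      smul_smul]

theorem exists_multilinearMap_eq_multiPolarization (hP : IsMultiPoly 𝕂 n P) :
    ∃ B : MultilinearMap 𝕂 (fun _ : (Σ j, Fin (n j)) => E) F,
      ∀ x, B x = multiPolarization n P x := by
  choose B hB using fun j w => (hP j w).exists_multilinearMap_eq_polarization
  refine ⟨{ toFun := multiPolarization n P, map_update_add' := ?_, map_update_smul' := ?_ },
    fun _ => rfl⟩
  · rintro _ x ⟨j₀, i₀⟩ v w
    simp only [multiPolarization_update, ← hB, MultilinearMap.map_update_add, smul_add,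
      sum_add_distrib]
  · rintro _ x ⟨j₀, i₀⟩ c v
    simp only [multiPolarization_update, ← hB, MultilinearMap.map_update_smul, smul_sum,
      smul_comm c]

theorem multiPolarization_diag (hP : IsMultiPoly 𝕂 n P) (z : Fin k → E) :
    multiPolarization n P (fun p => z p.1) = (∏ j, ((n j)! : ℤ)) • P z := by
  have term : ∀ S : ∀ j, Finset (Fin (n j)),
      P (blockSum S fun p => z p.1) = (∏ j, (#(S j) : ℤ) ^ n j) • P z := by
    intro S
    have hS : (blockSum S fun p => z p.1) = fun j => (#(S j) : 𝕂) • z j := by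
      funext j
      simp [blockSum, Nat.cast_smul_eq_nsmul]
    rw [hS, hP.map_smul, ← Int.cast_smul_eq_zsmul 𝕂]
    push_cast
    rfl
  unfold multiPolarization
  simp only [term, smul_smul, ← sum_smul, ← prod_mul_distrib]
  rw [← Fintype.prod_sum fun j (T : Finset (Fin (n j))) => (-1 : ℤ) ^ (n j - #T) * #T ^ n j]
  simp only [sum_neg_one_pow_mul_card_pow]

theorem isHomogPoly_sum (hP : IsMultiPoly 𝕂 n P) : IsHomogPoly 𝕂 (∑ j, n j) P := by
  obtain ⟨B, hB⟩ := hP.exists_multilinearMap_eq_multiPolarization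
  set c : 𝕂 := ∏ j, ((n j)! : 𝕂)
  have hc : c ≠ 0 := prod_ne_zero_iff.2 fun j _ => Nat.cast_ne_zero.2 (Nat.factorial_ne_zero _)
  refine ⟨((c⁻¹ • B).compLinearMap fun p => LinearMap.proj p.1).domDomCongr finSigmaFinEquiv,
    fun z => ?_⟩
  simp only [MultilinearMap.domDomCongr_apply, MultilinearMap.compLinearMap_apply, smul_apply,
    LinearMap.proj_apply, hB]
  rw [hP.multiPolarization_diag, ← Int.cast_smul_eq_zsmul 𝕂, smul_smul]
  push_cast
  rw [inv_mul_cancel₀ hc, one_smul]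

end IsMultiPoly

end Homogeneous

/-- Every `(k,m)`-linear mapping, i.e. every `(m, …, m)`-homogeneous polynomial
`P : E^k → F` (`m` repeated `k` times), is a `km`-homogeneous polynomial on `E^k`. -/
theorem kmLinear_isHomogPoly {𝕂 : Type*} [RCLike 𝕂] {E F : Type*}
    [AddCommGroup E] [Module 𝕂 E] [AddCommGroup F] [Module 𝕂 F]
    {k m : ℕ} (P : (Fin k → E) → F) (hP : IsMultiPoly 𝕂 (fun _ : Fin k => m) P) :
    ∃ A : MultilinearMap 𝕂 (fun _ : Fin (k * m) => (Fin k → E)) F,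
      ∀ z : Fin k → E, P z = A fun _ => z := by
  have hdeg : ∑ _j : Fin k, m = k * m := by simp
  exact (hdeg ▸ hP.isHomogPoly_sum : IsHomogPoly 𝕂 (k * m) P)
end

section
/- Let P : E^m → F be an (n,…,n)-homogeneous polynomial (n repeated m times). Then for all x₁,…,x_d ∈ E and λ₁,…,λ_d ∈ 𝕂: P(Σ_{j=1}^d λ_j x_j)^m = 2^{−mn} Σ_{(α_{ij})} Σ_{ε∈{±1}^{mn}} (λ₁^{|α_{·1}|} ⋯ λ_d^{|α_{·d}|} / (α₁!⋯α_m!)) · ε₁⋯ε_{mn} · P(Σ_{j=1}^d ε_{1j} x_j, …, Σ_{j=1}^d ε_{mj} x_j), where the outer sum is over all matrices (α_{ij}) ∈ M_{m×d}(ℕ₀) whose every row sum equals n, and |α_{·j}| = Σ_{i=1}^m α_{ij} denotes the j-th column sum. -/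
/-!
Fix all coordinates of `P` but one: the slice is `z ↦ A (z, …, z)` for an `n`-linear `A`.
Expanding `A (∑ₜ δₜ yₜ, …, ∑ₜ δₜ yₜ)` multilinearly and summing against `δ₁ ⋯ δₙ` over all
sign vectors `δ ∈ {±1}ⁿ` leaves `2ⁿ` times the terms indexed by permutations (polarization).
When `y` lists `x_j` exactly `β_j` times, `∑ₜ δₜ yₜ = ∑ⱼ ε_j x_j` with `ε_j` the sum of the
signs in the `j`-th block, and each word `r : Fin n → Fin d` of type `β` arises from `β!`
permutations; so `2⁻ⁿ ∑_β λ^β/β! ∑_δ δ₁⋯δₙ A(∑ⱼ ε_j x_j, …)` is the multinomial expansion of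
`A (∑ λⱼ xⱼ, …)`. Expanding the `m` coordinates one after the other and multiplying the
weights gives the formula, the signs of row `i` being the `i`-th block of `ε ∈ {±1}^{mn}`.
-/

open scoped BigOperators

/-- The sign `ε_t ∈ {±1}` at position `t ∈ {0, …, N-1}` (as an integer; `0` out of range). -/
def signAt {N : ℕ} (ε : Fin N → ℤˣ) (t : ℕ) : ℤ :=
  if h : t < N then (ε ⟨t, h⟩ : ℤ) else 0

/-- `ε_{ij} = ∑_{k=1}^{α_{ij}} ε_{(i-1)n + α_{i1} + ⋯ + α_{i,j-1} + k}` (and `ε_{ij} = 0`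
when `α_{ij} = 0`). -/
def epsSum {m d : ℕ} (n : ℕ) (ε : Fin (m * n) → ℤˣ) (α : Fin m → Fin d → ℕ)
    (i : Fin m) (j : Fin d) : ℤ :=
  ∑ t ∈ Finset.range (α i j),
    signAt ε ((i : ℕ) * n + (∑ j' ∈ Finset.univ.filter (fun j' => j' < j), α i j') + t)

open Finset

section FiberCard

variable {α ι : Type*} [Fintype α] [DecidableEq ι]

def fiberCard (r : α → ι) (j : ι) : ℕ := #{a | r a = j}

lemma sum_fiberCard [Fintype ι] (r : α → ι) : ∑ j, fiberCard r j = Fintype.card α :=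
  (card_eq_sum_card_fiberwise fun a _ => mem_univ (r a)).symm

lemma prod_comp_eq_prod_pow_fiberCard [Fintype ι] {M : Type*} [CommMonoid M] (f : ι → M)
    (r : α → ι) : ∏ a, f (r a) = ∏ j, f j ^ fiberCard r j := by
  rw [← prod_fiberwise univ r fun a => f (r a)]
  refine prod_congr rfl fun j _ => ?_
  rw [prod_congr rfl fun a ha => by rw [(mem_filter.mp ha).2], prod_const]
  rfl

lemma fiberCard_comp_perm [DecidableEq α] (r : α → ι) (σ : Equiv.Perm α) :
    fiberCard (r ∘ σ) = fiberCard r := by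
  funext j
  simp only [fiberCard, ← Fintype.card_subtype]
  exact Fintype.card_congr (σ.subtypeEquiv fun _ => Iff.rfl)

lemma exists_perm_comp_eq_of_fiberCard_eq {b r : α → ι} (h : fiberCard r = fiberCard b) :
    ∃ τ : Equiv.Perm α, b ∘ τ = r := by
  have hfib : ∀ j, Fintype.card {a // r a = j} = Fintype.card {a // b a = j} := fun j => by
    rw [Fintype.card_subtype, Fintype.card_subtype]
    exact congrFun h j
  exact ⟨Equiv.ofFiberEquiv fun j => Fintype.equivOfCardEq (hfib j),
    funext (Equiv.ofFiberEquiv_map _)⟩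

variable [Fintype ι] [DecidableEq α]

lemma card_perm_comp_eq_of_fiberCard_eq {b r : α → ι} (h : fiberCard r = fiberCard b) :
    Fintype.card {σ : Equiv.Perm α // b ∘ σ = r} = ∏ j, (fiberCard b j).factorial := by
  obtain ⟨τ, rfl⟩ := exists_perm_comp_eq_of_fiberCard_eq h
  have hshift : {σ : Equiv.Perm α // b ∘ σ = b ∘ τ} ≃ {σ : Equiv.Perm α // b ∘ σ = b} :=
    (Equiv.mulRight τ⁻¹).subtypeEquiv fun σ => by
      simp only [funext_iff, Function.comp_apply, Equiv.coe_mulRight, Equiv.Perm.coe_mul,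
        Equiv.Perm.inv_def]
      exact ⟨fun h x => by simpa using h (τ.symm x), fun h x => by simpa using h (τ x)⟩
  rw [Fintype.card_congr hshift, DomMulAct.stabilizer_card]
  simp only [fiberCard, Fintype.card_subtype]

lemma sum_perm_comp {M : Type*} [AddCommMonoid M] (b : α → ι) (F : (α → ι) → M) :
    ∑ σ : Equiv.Perm α, F (b ∘ σ) =
      (∏ j, (fiberCard b j).factorial) • ∑ r with fiberCard r = fiberCard b, F r := by
  rw [← sum_fiberwise_of_maps_to (g := fun σ : Equiv.Perm α => b ∘ σ)
    (t := {r | fiberCard r = fiberCard b}) fun σ _ => by simp [fiberCard_comp_perm], smul_sum]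
  refine sum_congr rfl fun r hr => ?_
  rw [sum_congr rfl fun σ hσ => by rw [(mem_filter.mp hσ).2], sum_const,
    ← Fintype.card_subtype, card_perm_comp_eq_of_fiberCard_eq (mem_filter.mp hr).2]

end FiberCard

theorem MultilinearMap.apply_sum_smul_eq_sum_fiberCard {R ι κ M N : Type*} [CommSemiring R]
    [Fintype ι] [DecidableEq ι] [Fintype κ] [DecidableEq κ] [AddCommMonoid M] [Module R M]
    [AddCommMonoid N] [Module R N] (A : MultilinearMap R (fun _ : ι => M) N) (c : κ → R)
    (x : κ → M) :
    A (fun _ => ∑ j, c j • x j) =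
      ∑ r : ι → κ, (∏ j, c j ^ fiberCard r j) • A (fun i => x (r i)) := by
  simp_rw [A.map_sum, A.map_smul_univ, prod_comp_eq_prod_pow_fiberCard c]

section Polarization

variable {ι : Type*} [Fintype ι] [DecidableEq ι]

lemma sum_units_prod_mul_prod_comp (g : ι → ι) :
    ∑ δ : ι → ℤˣ, (∏ t, (δ t : ℤ)) * ∏ i, (δ (g i) : ℤ) =
      if Function.Bijective g then 2 ^ Fintype.card ι else 0 := by
  split_ifs with hg
  · have hsq : ∀ δ : ι → ℤˣ, (∏ t, (δ t : ℤ)) * ∏ i, (δ (g i) : ℤ) = 1 := fun δ => by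
      rw [show ∏ i, (δ (g i) : ℤ) = ∏ t, (δ t : ℤ) from
        Equiv.prod_comp (Equiv.ofBijective g hg) fun t => (δ t : ℤ), ← prod_mul_distrib]
      exact prod_eq_one fun t _ => by rw [← Units.val_mul, Int.units_mul_self, Units.val_one]
    simp [hsq, Fintype.card_units_int]
  · obtain ⟨t₀, ht₀⟩ : ∃ t₀, ∀ i, g i ≠ t₀ := by
      simpa [Function.Surjective] using
        fun hs => hg ⟨Finite.injective_iff_surjective.mpr hs, hs⟩
    have hpow : ∀ δ : ι → ℤˣ, (∏ t, (δ t : ℤ)) * ∏ i, (δ (g i) : ℤ) =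
        ∏ t, (δ t : ℤ) ^ (fiberCard g t + 1) := fun δ => by
      rw [prod_comp_eq_prod_pow_fiberCard (fun t => (δ t : ℤ)) g, ← prod_mul_distrib]
      exact prod_congr rfl fun t _ => by rw [pow_succ']
    -- `g` misses `t₀`, so the two signs at `t₀` cancel
    have hmiss : fiberCard g t₀ = 0 := by simp [fiberCard, ht₀]
    rw [sum_congr rfl fun δ _ => hpow δ,
      ← Fintype.prod_sum fun t (u : ℤˣ) => (u : ℤ) ^ (fiberCard g t + 1)]
    exact prod_eq_zero (mem_univ t₀) (by rw [hmiss]; rfl)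

theorem MultilinearMap.polarization {M N : Type*} [AddCommGroup M] [AddCommGroup N]
    (A : MultilinearMap ℤ (fun _ : ι => M) N) (z : ι → M) :
    ∑ δ : ι → ℤˣ, (∏ t, (δ t : ℤ)) • A (fun _ => ∑ t, (δ t : ℤ) • z t) =
      (2 ^ Fintype.card ι : ℤ) • ∑ σ : Equiv.Perm ι, A (fun i => z (σ i)) := by
  have expand : ∀ δ : ι → ℤˣ, A (fun _ => ∑ t, (δ t : ℤ) • z t) =
      ∑ g : ι → ι, (∏ i, (δ (g i) : ℤ)) • A (fun i => z (g i)) := fun δ => by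
    simp_rw [A.map_sum, A.map_smul_univ]
  calc _ = ∑ g : ι → ι, (∑ δ : ι → ℤˣ, (∏ t, (δ t : ℤ)) * ∏ i, (δ (g i) : ℤ)) •
        A (fun i => z (g i)) := by
        simp_rw [expand, smul_sum, smul_smul, sum_smul]
        exact sum_comm
    _ = ∑ g ∈ univ.filter Function.Bijective,
        (2 ^ Fintype.card ι : ℤ) • A (fun i => z (g i)) := by
        rw [sum_filter]
        refine sum_congr rfl fun g _ => ?_
        rw [sum_units_prod_mul_prod_comp, ite_smul, zero_smul]
    _ = _ := by
        rw [smul_sum]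
        exact (sum_bij (fun (σ : Equiv.Perm ι) _ => (σ : ι → ι))
          (fun σ _ => mem_filter.mpr ⟨mem_univ _, σ.bijective⟩)
          (fun _ _ _ _ h => DFunLike.coe_injective h)
          (fun g hg => ⟨Equiv.ofBijective g (mem_filter.mp hg).2, mem_univ _, rfl⟩)
          fun _ _ => rfl).symm

end Polarization

section Blocks

variable {n d : ℕ}

lemma signAt_val {N : ℕ} (δ : Fin N → ℤˣ) (t : Fin N) : signAt δ t = δ t := dif_pos t.2

def blockStart (β : Fin d → ℕ) (j : Fin d) : ℕ := ∑ j' ∈ univ.filter (fun j' => j' < j), β j'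

def blockSign (β : Fin d → ℕ) (δ : Fin n → ℤˣ) (j : Fin d) : ℤ :=
  ∑ t ∈ range (β j), signAt δ (blockStart β j + t)

def blockEquiv (β : Fin d → ℕ) (hβ : ∑ j, β j = n) : (Σ j, Fin (β j)) ≃ Fin n :=
  finSigmaFinEquiv.trans (finCongr hβ)

/-- The `j` with `blockStart β j ≤ t < blockStart β j + β j`. -/
def blockIndex (β : Fin d → ℕ) (hβ : ∑ j, β j = n) (t : Fin n) : Fin d :=
  ((blockEquiv β hβ).symm t).1

lemma blockEquiv_val (β : Fin d → ℕ) (hβ : ∑ j, β j = n) (p : Σ j, Fin (β j)) :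
    (blockEquiv β hβ p : ℕ) = blockStart β p.1 + p.2 := by
  have hIio : univ.filter (· < p.1) = univ.map (Fin.castLEEmb p.1.2.le) := by
    ext j
    simp only [mem_filter, mem_univ, true_and, mem_map, Fin.castLEEmb_apply]
    exact ⟨fun h => ⟨⟨j, h⟩, rfl⟩, fun ⟨a, ha⟩ => ha ▸ a.2⟩
  rw [blockEquiv, Equiv.trans_apply, finCongr_apply, Fin.val_cast, finSigmaFinEquiv_apply,
    blockStart, hIio, sum_map]
  rfl

lemma blockIndex_blockEquiv (β : Fin d → ℕ) (hβ : ∑ j, β j = n) (p : Σ j, Fin (β j)) :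
    blockIndex β hβ (blockEquiv β hβ p) = p.1 := by
  rw [blockIndex, Equiv.symm_apply_apply]

lemma fiberCard_blockIndex (β : Fin d → ℕ) (hβ : ∑ j, β j = n) :
    fiberCard (blockIndex β hβ) = β := by
  funext j
  rw [fiberCard, ← Fintype.card_subtype, ← Fintype.card_fin (β j)]
  exact Fintype.card_congr
    (((blockEquiv β hβ).symm.subtypeEquiv fun _ => Iff.rfl).trans (Equiv.sigmaSubtype j))

lemma sum_blockSign_smul {M : Type*} [AddCommGroup M] (β : Fin d → ℕ) (hβ : ∑ j, β j = n)
    (δ : Fin n → ℤˣ) (x : Fin d → M) :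
    ∑ j, blockSign β δ j • x j = ∑ t, (δ t : ℤ) • x (blockIndex β hβ t) := by
  rw [← (blockEquiv β hβ).sum_comp, Fintype.sum_sigma]
  refine sum_congr rfl fun j _ => ?_
  simp_rw [blockIndex_blockEquiv, ← sum_smul, blockSign, ← Fin.sum_univ_eq_sum_range]
  congr 1
  refine sum_congr rfl fun s _ => ?_
  rw [← signAt_val, blockEquiv_val]

end Blocks

section Leibniz

variable {𝕂 E F : Type*} [Field 𝕂] [AddCommGroup E] [Module 𝕂 E] [AddCommGroup F] [Module 𝕂 F]
  {n d : ℕ}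

def leibnizCoeff (lam : Fin d → 𝕂) (β : Fin d → ℕ) : 𝕂 :=
  (∏ j, lam j ^ β j) / ((∏ j, (β j).factorial : ℕ) : 𝕂)

lemma prod_leibnizCoeff {m : ℕ} (lam : Fin d → 𝕂) (α : Fin m → Fin d → ℕ) :
    ∏ i, leibnizCoeff lam (α i) =
      (∏ j, lam j ^ ∑ i, α i j) / ((∏ i, ∏ j, (α i j).factorial : ℕ) : 𝕂) := by
  simp only [leibnizCoeff, prod_div_distrib, Nat.cast_prod]
  rw [prod_comm]
  simp only [prod_pow_eq_pow_sum]

lemma MultilinearMap.sum_signs_smul_apply_blockSign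
    (A : MultilinearMap 𝕂 (fun _ : Fin n => E) F) (x : Fin d → E) {β : Fin d → ℕ}
    (hβ : ∑ j, β j = n) :
    ∑ δ : Fin n → ℤˣ, (∏ t, (δ t : ℤ)) • A (fun _ => ∑ j, blockSign β δ j • x j) =
      ((2 ^ n * ∏ j, (β j).factorial : ℕ) : 𝕂) •
        ∑ r : Fin n → Fin d with fiberCard r = β, A (fun i => x (r i)) := by
  have hpol := (A.restrictScalars ℤ).polarization fun t => x (blockIndex β hβ t)
  rw [MultilinearMap.coe_restrictScalars, Fintype.card_fin] at hpol
  have hperm := sum_perm_comp (blockIndex β hβ) fun r => A (fun i => x (r i))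
  simp only [Function.comp_apply, fiberCard_blockIndex] at hperm
  simp_rw [sum_blockSign_smul β hβ]
  rw [hpol, hperm, ← Int.cast_smul_eq_zsmul 𝕂, ← Nat.cast_smul_eq_nsmul 𝕂, smul_smul]
  push_cast
  rfl

theorem MultilinearMap.leibniz_polarization [CharZero 𝕂]
    (A : MultilinearMap 𝕂 (fun _ : Fin n => E) F) (x : Fin d → E) (lam : Fin d → 𝕂) :
    A (fun _ => ∑ j, lam j • x j) =
      (2 ^ n : 𝕂)⁻¹ • ∑ β ∈ Nat.antidiagonalTuple d n, ∑ δ : Fin n → ℤˣ,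
        leibnizCoeff lam β • (∏ t, (δ t : ℤ)) • A (fun _ => ∑ j, blockSign β δ j • x j) := by
  have hterm : ∀ β ∈ Nat.antidiagonalTuple d n,
      ∑ δ : Fin n → ℤˣ, leibnizCoeff lam β • (∏ t, (δ t : ℤ)) •
          A (fun _ => ∑ j, blockSign β δ j • x j) =
        (2 ^ n : 𝕂) • ∑ r : Fin n → Fin d with fiberCard r = β,
          (∏ j, lam j ^ fiberCard r j) • A (fun i => x (r i)) := fun β hβ => by
    rw [← smul_sum, A.sum_signs_smul_apply_blockSign x (Nat.mem_antidiagonalTuple.mp hβ),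
      smul_sum, smul_sum, smul_sum]
    refine sum_congr rfl fun r hr => ?_
    rw [(mem_filter.mp hr).2, smul_smul, smul_smul, leibnizCoeff]
    congr 1
    have : ((∏ j, (β j).factorial : ℕ) : 𝕂) ≠ 0 := Nat.cast_ne_zero.mpr (by positivity)
    push_cast at this ⊢
    field_simp
  have hmaps : ∀ r : Fin n → Fin d, fiberCard r ∈ Nat.antidiagonalTuple d n := fun r => by
    rw [Nat.mem_antidiagonalTuple, sum_fiberCard, Fintype.card_fin]
  rw [sum_congr rfl hterm, ← smul_sum, inv_smul_smul₀ (pow_ne_zero _ two_ne_zero),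
    sum_fiberwise_of_maps_to fun r _ => hmaps r, A.apply_sum_smul_eq_sum_fiberCard]

end Leibniz

section Slices

lemma Fin.sum_piFinset_succ_const {A M : Type*} [DecidableEq A] [AddCommMonoid M] {m : ℕ}
    (S : Finset A) (G : (Fin (m + 1) → A) → M) :
    ∑ f ∈ Fintype.piFinset (fun _ => S), G f =
      ∑ a ∈ S, ∑ g ∈ Fintype.piFinset (fun _ : Fin m => S), G (Fin.cons a g) := by
  have h := filter_piFinset_eq_map_consEquiv (fun _ : Fin (m + 1) => S) fun _ => True
  simp only [filter_true] at h
  rw [h, sum_map, sum_product]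
  rfl

lemma Fintype.sum_piFinset_product {ι A B M : Type*} [Fintype ι] [DecidableEq ι]
    [DecidableEq A] [DecidableEq B] [AddCommMonoid M] (s : Finset A) (t : Finset B)
    (G : (ι → A × B) → M) :
    ∑ f ∈ Fintype.piFinset (fun _ => s ×ˢ t), G f =
      ∑ a ∈ Fintype.piFinset (fun _ => s), ∑ b ∈ Fintype.piFinset (fun _ => t),
        G (fun i => (a i, b i)) := by
  rw [← sum_product']
  refine sum_nbij' (fun f => (fun i => (f i).1, fun i => (f i).2)) (fun p i => (p.1 i, p.2 i))
    ?_ ?_ (fun _ _ => rfl) (fun _ _ => rfl) (fun _ _ => rfl)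
  · intro f hf
    simp only [Fintype.mem_piFinset, mem_product] at hf ⊢
    exact ⟨fun i => (hf i).1, fun i => (hf i).2⟩
  · intro p hp
    simp only [Fintype.mem_piFinset, mem_product] at hp ⊢
    exact fun i => ⟨hp.1 i, hp.2 i⟩

theorem apply_const_eq_sum_piFinset_of_slice {R E F A : Type*} [CommSemiring R]
    [AddCommMonoid F] [Module R F] [DecidableEq A] {m : ℕ} (P : (Fin m → E) → F)
    (S : Finset A) (w : A → R) (v : A → E) (s : E)
    (hslice : ∀ (y : Fin m → E) (i : Fin m),
      P (Function.update y i s) = ∑ a ∈ S, w a • P (Function.update y i (v a))) :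
    P (fun _ => s) =
      ∑ f ∈ Fintype.piFinset (fun _ => S), (∏ i, w (f i)) • P (fun i => v (f i)) := by
  induction m with
  | zero =>
    rw [Fintype.piFinset_of_isEmpty, Fintype.sum_unique, Fin.prod_univ_zero, one_smul]
    exact congrArg P (Subsingleton.elim _ _)
  | succ m ih =>
    have hcons : ∀ c, Function.update (fun _ : Fin (m + 1) => s) 0 c = Fin.cons c fun _ => s :=
      fun c => by
        funext i
        cases i using Fin.cases <;> simp
    have hfirst := hslice (fun _ => s) 0
    rw [Function.update_eq_self] at hfirst
    simp_rw [hcons] at hfirst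
    rw [hfirst, Fin.sum_piFinset_succ_const]
    refine sum_congr rfl fun a _ => ?_
    rw [ih (fun y => P (Fin.cons (v a) y)) fun y i => by
      simpa only [Fin.cons_update] using hslice (Fin.cons (v a) y) i.succ, smul_sum]
    refine sum_congr rfl fun g _ => ?_
    rw [smul_smul, Fin.prod_univ_succ]
    simp only [Fin.cons_zero, Fin.cons_succ]
    exact congrArg _ (congrArg P (Fin.comp_cons v a g).symm)

end Slices

section Rows

variable {m n d : ℕ}

def rowSigns (ε : Fin (m * n) → ℤˣ) (i : Fin m) (t : Fin n) : ℤˣ := ε (finProdFinEquiv (i, t))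

lemma sum_comp_rowSigns {M : Type*} [AddCommMonoid M] (G : (Fin m → Fin n → ℤˣ) → M) :
    ∑ ε, G (rowSigns ε) = ∑ δ, G δ :=
  ((finProdFinEquiv.arrowCongr (Equiv.refl ℤˣ)).symm.trans (Equiv.curry _ _ _)).sum_comp G

lemma prod_rowSigns (ε : Fin (m * n) → ℤˣ) :
    ∏ i, ∏ t, (rowSigns ε i t : ℤ) = ∏ k, (ε k : ℤ) := by
  rw [← Fintype.prod_prod_type']
  exact finProdFinEquiv.prod_comp fun k => (ε k : ℤ)

lemma epsSum_eq_blockSign (ε : Fin (m * n) → ℤˣ) (α : Fin m → Fin d → ℕ) {i : Fin m}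
    (hα : ∑ j, α i j = n) (j : Fin d) :
    epsSum n ε α i j = blockSign (α i) (rowSigns ε i) j := by
  refine sum_congr rfl fun t ht => ?_
  set u := blockEquiv (α i) hα ⟨j, ⟨t, mem_range.mp ht⟩⟩
  have hu : (u : ℕ) = blockStart (α i) j + t := blockEquiv_val _ _ _
  have hk : (i : ℕ) * n + blockStart (α i) j + t = (finProdFinEquiv (i, u) : ℕ) := by
    rw [finProdFinEquiv_apply_val, hu]
    ring
  change signAt ε ((i : ℕ) * n + blockStart (α i) j + t) = _
  rw [hk, signAt_val, ← hu, signAt_val]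
  rfl

end Rows

/-- Combined Leibniz/polarization expansion: for an `(n, …, n)`-homogeneous polynomial
`P : E^m → F`, all `x₁, …, x_d ∈ E` and `λ₁, …, λ_d ∈ 𝕂`,
`P (∑ⱼ λⱼ xⱼ)^m = 2^{-mn} ∑_α ∑_ε (λ₁^{|α_{·1}|} ⋯ λ_d^{|α_{·d}|} / (α₁! ⋯ α_m!))
ε₁ ⋯ ε_{mn} P (∑ⱼ ε_{1j} xⱼ, …, ∑ⱼ ε_{mj} xⱼ)`, where `α` ranges over the `m × d` matrices
of nonnegative integers with all row sums equal to `n`. -/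
theorem multipoly_leibniz_polarization {𝕂 : Type*} [RCLike 𝕂] {E F : Type*}
    [AddCommGroup E] [Module 𝕂 E] [AddCommGroup F] [Module 𝕂 F]
    {m n d : ℕ} (P : (Fin m → E) → F) (hP : IsMultiPoly 𝕂 (fun _ : Fin m => n) P)
    (x : Fin d → E) (lam : Fin d → 𝕂) :
    P (fun _ => ∑ j : Fin d, lam j • x j) =
      (2 ^ (m * n) : 𝕂)⁻¹ •
        ∑ α ∈ Fintype.piFinset (fun _ : Fin m => Finset.Nat.antidiagonalTuple d n),
          ∑ ε : Fin (m * n) → ℤˣ,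
            ((∏ j : Fin d, lam j ^ (∑ i : Fin m, α i j)) /
                ((∏ i : Fin m, ∏ j : Fin d, (α i j).factorial : ℕ) : 𝕂)) •
              (∏ k : Fin (m * n), (ε k : ℤ)) •
                P (fun i => ∑ j : Fin d, epsSum n ε α i j • x j) := by
  have hslice : ∀ (y : Fin m → E) (i : Fin m),
      P (Function.update y i (∑ j, lam j • x j)) =
        ∑ p ∈ Nat.antidiagonalTuple d n ×ˢ (univ : Finset (Fin n → ℤˣ)),
          ((2 ^ n : 𝕂)⁻¹ * leibnizCoeff lam p.1 * ((∏ t, (p.2 t : ℤ) : ℤ) : 𝕂)) •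
            P (Function.update y i (∑ j, blockSign p.1 p.2 j • x j)) := fun y i => by
    obtain ⟨A, hA⟩ := hP i y
    simp only [hA, A.leibniz_polarization, sum_product, smul_sum, mul_smul,
      Int.cast_smul_eq_zsmul]
  rw [apply_const_eq_sum_piFinset_of_slice P _ _ _ _ hslice, Fintype.sum_piFinset_product,
    Fintype.piFinset_univ, smul_sum]
  refine sum_congr rfl fun α hα => ?_
  rw [← sum_comp_rowSigns, smul_sum]
  refine sum_congr rfl fun ε _ => ?_
  have hrows : ∀ i, ∑ j, α i j = n := fun i =>
    Nat.mem_antidiagonalTuple.mp (Fintype.mem_piFinset.mp hα i)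
  simp only [epsSum_eq_blockSign ε α (hrows _), prod_mul_distrib, prod_const, card_univ,
    Fintype.card_fin, prod_leibnizCoeff, ← prod_rowSigns ε, smul_smul,
    ← Int.cast_smul_eq_zsmul 𝕂]
  congr 1
  rw [inv_pow, ← pow_mul, mul_comm n m]
  push_cast
  ring
end

section
/- For each symmetric mn-linear map A : E^{mn} → F, the map ΨA : E^m → F defined by ΨA(x₁,…,x_m) = A(x₁,…,x₁, x₂,…,x₂, …, x_m,…,x_m) (each x_i repeated n times) is a symmetric (n,…,n)-homogeneous polynomial (n repeated m times), and the map Ψ from the space of symmetric mn-linear maps E^{mn} → F to the space of symmetric (n,…,n)-homogeneous polynomials E^m → F is linear and injective. -/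
/-!
Ψ is linear because evaluating a multilinear map at a fixed point is linear in the map. Fixing all
blocks but the `j`-th one, `Ψ A` is `A` restricted to the `n` slots of that block, hence
`n`-homogeneous; a permutation of the blocks is induced by a permutation of the `mn` slots,
hence `Ψ A` is symmetric when `A` is. Injectivity comes from polarization: since
`Ψ A (x, …, x) = A (x, …, x)`, it suffices that a symmetric `N`-linear map is determined by its
diagonal, which follows from
`∑_S (-1)^(N - |S|) A (∑_{i∈S} xᵢ, …, ∑_{i∈S} xᵢ) = ∑_σ A (x_σ(1), …, x_σ(N)) = N! A (x₁, …, x_N)`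
in characteristic zero.
-/

open scoped BigOperators

/-- `P : E^m → F` is symmetric if it is invariant under permutations of its arguments. -/
def IsSymm' {E F : Type*} {m : ℕ} (P : (Fin m → E) → F) : Prop :=
  ∀ (σ : Equiv.Perm (Fin m)) (x : Fin m → E), P (x ∘ σ) = P x

/-- `Ψ A (x₁, …, x_m) = A (x₁, …, x₁, x₂, …, x₂, …, x_m, …, x_m)`, each `x_i` repeated
`n` times (the argument in slot `k` of `A` is `x_{⌊k/n⌋}`). -/
def Psi (𝕂 : Type*) [RCLike 𝕂] {E F : Type*}
    [AddCommGroup E] [Module 𝕂 E] [AddCommGroup F] [Module 𝕂 F] (m n : ℕ)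
    (A : MultilinearMap 𝕂 (fun _ : Fin (m * n) => E) F) : (Fin m → E) → F :=
  fun x => A fun k => x k.divNat

open Finset

theorem Finset.sum_neg_one_pow_card_compl_of_subset {α : Type*} [Fintype α] [DecidableEq α]
    (t : Finset α) :
    ∑ S : Finset α, (if t ⊆ S then (-1 : ℤ) ^ #Sᶜ else 0) = if t = univ then 1 else 0 := by
  rw [← Equiv.sum_comp (compl_involutive.toPerm _)]
  simp only [Function.Involutive.coe_toPerm, compl_compl, subset_compl_comm (s := t)]
  rw [← sum_filter, filter_subset_univ, sum_powerset_neg_one_pow_card]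
  exact if_congr (compl_eq_empty_iff t) rfl rfl

namespace MultilinearMap

variable {R M F ι : Type*} [Semiring R] [AddCommMonoid M] [Module R M] [AddCommGroup F]
  [Module R F] [Fintype ι] [DecidableEq ι]

theorem sum_neg_one_pow_smul_map_sum_eq_sum_perm (A : MultilinearMap R (fun _ : ι => M) F)
    (x : ι → M) :
    ∑ S : Finset ι, (-1 : ℤ) ^ #Sᶜ • A (fun _ => ∑ i ∈ S, x i) = ∑ σ : Equiv.Perm ι, A (x ∘ σ) := by
  have expand (S : Finset ι) :
      A (fun _ => ∑ i ∈ S, x i) = ∑ r : ι → ι, if univ.image r ⊆ S then A (x ∘ r) else 0 := by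
    rw [A.map_sum_finset, ← sum_filter]
    congr 1
    ext r
    simp [Fintype.mem_piFinset, image_subset_iff]
  have sum_signs (r : ι → ι) :
      ∑ S : Finset ι, (-1 : ℤ) ^ #Sᶜ • (if univ.image r ⊆ S then A (x ∘ r) else 0) =
        if univ.image r = univ then A (x ∘ r) else 0 := by
    calc _ = (∑ S : Finset ι, if univ.image r ⊆ S then (-1 : ℤ) ^ #Sᶜ else 0) • A (x ∘ r) := by
          rw [sum_smul]
          congr! 1 with S
          split_ifs <;> simp
      _ = _ := by
          rw [sum_neg_one_pow_card_compl_of_subset]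
          split_ifs <;> simp
  simp only [expand, smul_sum]
  rw [sum_comm, Fintype.sum_congr _ _ sum_signs, ← sum_filter]
  symm
  refine sum_bij (fun σ _ => ⇑σ) (fun σ _ => ?_) (fun σ _ τ _ h => DFunLike.coe_injective h)
    (fun r hr => ?_) (fun _ _ => rfl)
  · simp
  · have hsurj : Function.Surjective r := by
      simpa [eq_univ_iff_forall, Function.Surjective] using hr
    exact ⟨Equiv.ofBijective r (Finite.surjective_iff_bijective.mp hsurj), mem_univ _, rfl⟩

theorem eq_zero_of_map_diag_eq_zero [IsAddTorsionFree F] {A : MultilinearMap R (fun _ : ι => M) F}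
    (hA : ∀ (σ : Equiv.Perm ι) (x : ι → M), A (x ∘ σ) = A x) (hdiag : ∀ y, A (fun _ => y) = 0) :
    A = 0 := by
  refine MultilinearMap.ext fun x => ?_
  have h := A.sum_neg_one_pow_smul_map_sum_eq_sum_perm x
  simp only [hdiag, smul_zero, sum_const_zero, hA, sum_const, card_univ] at h
  exact (smul_eq_zero_iff_right Fintype.card_ne_zero).mp h.symm

end MultilinearMap

@[simp]
theorem Fin.divNat_finProdFinEquiv {m n : ℕ} (p : Fin m × Fin n) :
    (finProdFinEquiv p).divNat = p.1 :=
  congrArg Prod.fst (finProdFinEquiv.symm_apply_apply p)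

theorem Fin.card_divNat_eq {m n : ℕ} (j : Fin m) :
    Fintype.card {k : Fin (m * n) // k.divNat = j} = n := by
  rw [Fintype.card_congr (finProdFinEquiv.symm.subtypeEquiv (p := fun k => k.divNat = j)
    (q := fun p => p.1 = j) fun _ => Iff.rfl), Fintype.card_subtype, card_filter,
    Fintype.sum_prod_type]
  simp [apply_ite card]

theorem Fin.exists_perm_divNat_comp {m n : ℕ} (σ : Equiv.Perm (Fin m)) :
    ∃ τ : Equiv.Perm (Fin (m * n)), Fin.divNat ∘ τ = σ ∘ Fin.divNat :=
  ⟨finProdFinEquiv.symm.trans ((σ.prodCongr (Equiv.refl _)).trans finProdFinEquiv), by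
    ext k; simp⟩

section

variable {𝕂 : Type*} [RCLike 𝕂] {E F : Type*} [AddCommGroup E] [Module 𝕂 E] [AddCommGroup F]
  [Module 𝕂 F]

theorem MultilinearMap.isHomogPoly_diag {ι : Type*} [Fintype ι]
    (A : MultilinearMap 𝕂 (fun _ : ι => E) F) :
    IsHomogPoly 𝕂 (Fintype.card ι) fun x => A fun _ => x :=
  ⟨A.domDomCongr (Fintype.equivFin ι), fun _ => rfl⟩

theorem MultilinearMap.isMultiPoly_comp {ι : Type*} [Fintype ι] {m : ℕ}
    (A : MultilinearMap 𝕂 (fun _ : ι => E) F) (f : ι → Fin m) :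
    IsMultiPoly 𝕂 (fun j => Fintype.card {i // f i = j}) fun x => A (x ∘ f) := by
  intro j x
  convert (A.domDomRestrict (fun i => f i = j) (fun i => x (f i))).isHomogPoly_diag using 2 with y
  rw [domDomRestrict_apply]
  refine congrArg A (funext fun i => ?_)
  by_cases hi : f i = j <;> simp [hi]

theorem MultilinearMap.isSymm'_comp {ι : Type*} {m : ℕ} (A : MultilinearMap 𝕂 (fun _ : ι => E) F)
    (hA : ∀ (σ : Equiv.Perm ι) (x : ι → E), A (x ∘ σ) = A x) {f : ι → Fin m}
    (hf : ∀ σ : Equiv.Perm (Fin m), ∃ τ : Equiv.Perm ι, f ∘ τ = σ ∘ f) :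
    IsSymm' fun x => A (x ∘ f) := by
  intro σ x
  obtain ⟨τ, hτ⟩ := hf σ
  change A (x ∘ (σ ∘ f)) = A (x ∘ f)
  rw [← hτ]
  exact hA τ (x ∘ f)

end

theorem psi_linear_injective_general {𝕂 : Type*} [RCLike 𝕂] {E F : Type*}
    [AddCommGroup E] [Module 𝕂 E] [AddCommGroup F] [Module 𝕂 F]
    {m n : ℕ} :
    (∀ A : MultilinearMap 𝕂 (fun _ : Fin (m * n) => E) F,
        (∀ (σ : Equiv.Perm (Fin (m * n))) (z : Fin (m * n) → E), A (z ∘ σ) = A z) →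
        IsMultiPoly 𝕂 (fun _ : Fin m => n) (Psi 𝕂 m n A) ∧ IsSymm' (Psi 𝕂 m n A)) ∧
    (∀ A B : MultilinearMap 𝕂 (fun _ : Fin (m * n) => E) F,
        Psi 𝕂 m n (A + B) = Psi 𝕂 m n A + Psi 𝕂 m n B) ∧
    (∀ (c : 𝕂) (A : MultilinearMap 𝕂 (fun _ : Fin (m * n) => E) F),
        Psi 𝕂 m n (c • A) = c • Psi 𝕂 m n A) ∧
    (∀ A B : MultilinearMap 𝕂 (fun _ : Fin (m * n) => E) F,
        (∀ (σ : Equiv.Perm (Fin (m * n))) (z : Fin (m * n) → E), A (z ∘ σ) = A z) →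
        (∀ (σ : Equiv.Perm (Fin (m * n))) (z : Fin (m * n) → E), B (z ∘ σ) = B z) →
        Psi 𝕂 m n A = Psi 𝕂 m n B → A = B) := by
  have : IsAddTorsionFree F := .of_isTorsionFree 𝕂 F
  refine ⟨fun A hA => ⟨?_, A.isSymm'_comp hA Fin.exists_perm_divNat_comp⟩,
    fun _ _ => rfl, fun _ _ => rfl, fun A B hA hB hAB => ?_⟩
  · have h := A.isMultiPoly_comp (Fin.divNat (n := n))
    simp only [Fin.card_divNat_eq] at h
    exact h
  · rw [← sub_eq_zero]
    refine MultilinearMap.eq_zero_of_map_diag_eq_zero (fun σ x => ?_) fun y => ?_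
    · simp [hA, hB]
    · exact sub_eq_zero.mpr (congrFun hAB fun _ => y)

/-- For every symmetric `mn`-linear map `A : E^{mn} → F`, `Ψ A` is a symmetric
`(n, …, n)`-homogeneous polynomial `E^m → F`, and `Ψ` is linear and injective on the
space of symmetric `mn`-linear maps. -/
theorem psi_linear_injective {𝕂 : Type*} [RCLike 𝕂] {E F : Type*}
    [AddCommGroup E] [Module 𝕂 E] [AddCommGroup F] [Module 𝕂 F]
    {m n : ℕ} (hm : 0 < m) (hn : 0 < n) :
    (∀ A : MultilinearMap 𝕂 (fun _ : Fin (m * n) => E) F,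
        (∀ (σ : Equiv.Perm (Fin (m * n))) (z : Fin (m * n) → E), A (z ∘ σ) = A z) →
        IsMultiPoly 𝕂 (fun _ : Fin m => n) (Psi 𝕂 m n A) ∧ IsSymm' (Psi 𝕂 m n A)) ∧
    (∀ A B : MultilinearMap 𝕂 (fun _ : Fin (m * n) => E) F,
        Psi 𝕂 m n (A + B) = Psi 𝕂 m n A + Psi 𝕂 m n B) ∧
    (∀ (c : 𝕂) (A : MultilinearMap 𝕂 (fun _ : Fin (m * n) => E) F),
        Psi 𝕂 m n (c • A) = c • Psi 𝕂 m n A) ∧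
    (∀ A B : MultilinearMap 𝕂 (fun _ : Fin (m * n) => E) F,
        (∀ (σ : Equiv.Perm (Fin (m * n))) (z : Fin (m * n) → E), A (z ∘ σ) = A z) →
        (∀ (σ : Equiv.Perm (Fin (m * n))) (z : Fin (m * n) → E), B (z ∘ σ) = B z) →
        Psi 𝕂 m n A = Psi 𝕂 m n B → A = B) :=
  psi_linear_injective_general
end

section
/- The map P : ℝ² × ℝ² → ℝ defined by P((x₁,x₂),(y₁,y₂)) = x₁x₂y₁y₂ is a symmetric (2,2)-homogeneous polynomial, yet there exists no symmetric 4-linear map A : (ℝ²)⁴ → ℝ with P(x,y) = A(x,x,y,y) for all x, y ∈ ℝ²; in particular, P fails the entire polarization formula at x₀ = 0, x = e₁, y = e₂ (the canonical basis vectors). -/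
/-!
For a symmetric 4-linear map `A`, the form `Q x y = A (x, x, y, y)` satisfies
`Q (u + v) (u - v) = Q u u - Q u v - Q v u + Q v v`: swapping the two middle slots turns the
left side into `A (u + v, u - v, u + v, u - v)`, and in each pair of slots
`A (u + v, u - v, ·, ·) = A (u, u, ·, ·) - A (v, v, ·, ·)` by symmetry.
For `Q x y = x₁x₂y₁y₂`, `u = e₁`, `v = e₂` the left side is `-1` and the right side `0`.

The polarization sum only sees the diagonal `Q z z = (z₁z₂)²`; it returns the value at
`(e₁, e₁, e₂, e₂)` of the symmetric 4-linear form of this quartic, namely `1/6`, whereas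
`Q e₁ e₂ = 0`.
-/

open scoped BigOperators

theorem IsHomogPoly.const_smul {𝕂 E F : Type*} [RCLike 𝕂] [AddCommGroup E] [Module 𝕂 E]
    [AddCommGroup F] [Module 𝕂 F] {m : ℕ} {P : E → F} (hP : IsHomogPoly 𝕂 m P) (c : 𝕂) :
    IsHomogPoly 𝕂 m fun x => c • P x := by
  obtain ⟨A, hA⟩ := hP
  exact ⟨c • A, fun x => congrArg (c • ·) (hA x)⟩

theorem isHomogPoly_fst_mul_snd (𝕂 : Type*) [RCLike 𝕂] :
    IsHomogPoly 𝕂 2 fun x : 𝕂 × 𝕂 => x.1 * x.2 :=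
  ⟨(MultilinearMap.mkPiAlgebra 𝕂 (Fin 2) 𝕂).compLinearMap
      ![LinearMap.fst 𝕂 𝕂 𝕂, LinearMap.snd 𝕂 𝕂 𝕂],
    fun x => by simp [Fin.prod_univ_two]⟩

namespace MultilinearMap

variable {R M N : Type*} [CommRing R] [AddCommGroup M] [Module R M] [AddCommGroup N]
  [Module R N] {A : MultilinearMap R (fun _ : Fin 4 => M) N}

theorem apply_vec4_swap01 (hsymm : ∀ (σ : Equiv.Perm (Fin 4)) z, A (z ∘ σ) = A z)
    (p q r s : M) : A ![q, p, r, s] = A ![p, q, r, s] := by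
  rw [← hsymm (Equiv.swap 0 1)]
  congr 1
  funext i; fin_cases i <;> rfl

theorem apply_vec4_swap12 (hsymm : ∀ (σ : Equiv.Perm (Fin 4)) z, A (z ∘ σ) = A z)
    (p q r s : M) : A ![p, r, q, s] = A ![p, q, r, s] := by
  rw [← hsymm (Equiv.swap 1 2)]
  congr 1
  funext i; fin_cases i <;> rfl

theorem apply_vec4_swap_pairs (hsymm : ∀ (σ : Equiv.Perm (Fin 4)) z, A (z ∘ σ) = A z)
    (p q r s : M) : A ![r, s, p, q] = A ![p, q, r, s] := by
  rw [← hsymm (Equiv.swap 0 2 * Equiv.swap 1 3)]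
  congr 1
  funext i; fin_cases i <;> rfl

theorem apply_vec4_add_sub_of_swap01 (hswap : ∀ p q r s, A ![q, p, r, s] = A ![p, q, r, s])
    (u v z w : M) : A ![u + v, u - v, z, w] = A ![u, u, z, w] - A ![v, v, z, w] := by
  have curry₀ : ∀ a b, A ![a, b, z, w] = A.curryLeft a ![b, z, w] := fun _ _ => rfl
  have curry₁ : ∀ a b, A ![a, b, z, w] = (A.curryLeft a).curryLeft b ![z, w] := fun _ _ => rfl
  calc A ![u + v, u - v, z, w] = A ![u, u - v, z, w] + A ![v, u - v, z, w] := by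
        simp only [curry₀, map_add, add_apply]
    _ = A ![u, u, z, w] - A ![u, v, z, w] + (A ![v, u, z, w] - A ![v, v, z, w]) := by
        simp only [curry₁, map_sub, sub_apply]
    _ = A ![u, u, z, w] - A ![v, v, z, w] := by rw [hswap u v]; abel

theorem apply_vec4_add_add_sub_sub (hsymm : ∀ (σ : Equiv.Perm (Fin 4)) z, A (z ∘ σ) = A z)
    (u v : M) :
    A ![u + v, u + v, u - v, u - v] =
      A ![u, u, u, u] - A ![u, u, v, v] - A ![v, v, u, u] + A ![v, v, v, v] := by
  have h01 := apply_vec4_swap01 hsymm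
  calc A ![u + v, u + v, u - v, u - v] = A ![u + v, u - v, u + v, u - v] :=
        (apply_vec4_swap12 hsymm ..).symm
    _ = A ![u, u, u + v, u - v] - A ![v, v, u + v, u - v] := apply_vec4_add_sub_of_swap01 h01 ..
    _ = A ![u + v, u - v, u, u] - A ![u + v, u - v, v, v] := by
        rw [apply_vec4_swap_pairs hsymm (u + v), apply_vec4_swap_pairs hsymm (u + v)]
    _ = _ := by
        rw [apply_vec4_add_sub_of_swap01 h01, apply_vec4_add_sub_of_swap01 h01]
        abel

end MultilinearMap

theorem not_exists_symmetric_multilinear_fst_mul_snd {R : Type*} [CommRing R] [Nontrivial R]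
    {P : R × R → R × R → R} (hP : ∀ x y, P x y = x.1 * x.2 * y.1 * y.2) :
    ¬ ∃ A : MultilinearMap R (fun _ : Fin 4 => R × R) R,
        (∀ (σ : Equiv.Perm (Fin 4)) (z : Fin 4 → R × R), A (z ∘ σ) = A z) ∧
        (∀ x y, P x y = A ![x, x, y, y]) := by
  rintro ⟨A, hsymm, hA⟩
  have key := A.apply_vec4_add_add_sub_sub hsymm (1, 0) (0, 1)
  simp only [← hA, hP] at key
  norm_num at key

theorem Fintype.sum_fin_succ_pi {α M : Type*} [Fintype α] [AddCommMonoid M] {n : ℕ}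
    (f : (Fin (n + 1) → α) → M) : ∑ ε, f ε = ∑ a, ∑ ε, f (Matrix.vecCons a ε) :=
  ((Fin.consEquiv _).sum_comp f).symm.trans (Fintype.sum_prod_type _)

theorem entire_polarization_fst_mul_snd {P : ℝ × ℝ → ℝ × ℝ → ℝ}
    (hP : ∀ x y, P x y = x.1 * x.2 * y.1 * y.2) :
    ((Nat.factorial 4 * 2 ^ 4 : ℕ) : ℝ)⁻¹ *
        ∑ ε : Fin 4 → ℤˣ,
          (∏ k : Fin 4, ((ε k : ℤ) : ℝ)) *
            (fun z => P z z)
              ((0 : ℝ × ℝ) + ((ε 0 : ℤ) : ℝ) • ((1 : ℝ), (0 : ℝ))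
                + ((ε 1 : ℤ) : ℝ) • ((1 : ℝ), (0 : ℝ))
                + ((ε 2 : ℤ) : ℝ) • ((0 : ℝ), (1 : ℝ))
                + ((ε 3 : ℤ) : ℝ) • ((0 : ℝ), (1 : ℝ))) = 1 / 6 := by
  simp only [hP, Fintype.sum_fin_succ_pi, Fintype.sum_unique, Fin.prod_univ_four, Matrix.cons_val]
  norm_num [Nat.factorial, UnitsInt.univ]

/-- The map `P ((x₁,x₂),(y₁,y₂)) = x₁x₂y₁y₂` on `ℝ² × ℝ²` is a symmetric
`(2,2)`-homogeneous polynomial, yet there is no symmetric `4`-linear map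
`A : (ℝ²)⁴ → ℝ` with `P (x, y) = A (x, x, y, y)`; in particular `P` fails the entire
polarization formula at `x₀ = 0`, `x = e₁`, `y = e₂`. -/
theorem counterexample_entire_polarization :
    ∀ P : ℝ × ℝ → ℝ × ℝ → ℝ, (P = fun x y => x.1 * x.2 * y.1 * y.2) →
      (∀ x y, P x y = P y x) ∧
      (∀ y, IsHomogPoly ℝ 2 fun x => P x y) ∧
      (∀ x, IsHomogPoly ℝ 2 fun y => P x y) ∧
      (¬ ∃ A : MultilinearMap ℝ (fun _ : Fin 4 => ℝ × ℝ) ℝ,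
          (∀ (σ : Equiv.Perm (Fin 4)) (z : Fin 4 → ℝ × ℝ), A (z ∘ σ) = A z) ∧
          (∀ x y, P x y = A ![x, x, y, y])) ∧
      P (1, 0) (0, 1) ≠
        ((Nat.factorial 4 * 2 ^ 4 : ℕ) : ℝ)⁻¹ *
          ∑ ε : Fin 4 → ℤˣ,
            (∏ k : Fin 4, ((ε k : ℤ) : ℝ)) *
              (fun z => P z z)
                ((0 : ℝ × ℝ) + ((ε 0 : ℤ) : ℝ) • ((1 : ℝ), (0 : ℝ))
                  + ((ε 1 : ℤ) : ℝ) • ((1 : ℝ), (0 : ℝ))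
                  + ((ε 2 : ℤ) : ℝ) • ((0 : ℝ), (1 : ℝ))
                  + ((ε 3 : ℤ) : ℝ) • ((0 : ℝ), (1 : ℝ))) := by
  intro P hP
  have hPxy : ∀ x y, P x y = x.1 * x.2 * y.1 * y.2 := fun x y => by rw [hP]
  refine ⟨fun x y => by rw [hPxy, hPxy]; ring, fun y => ?_, fun x => ?_,
    not_exists_symmetric_multilinear_fst_mul_snd hPxy, ?_⟩
  · rw [show (fun x => P x y) = fun x => (y.1 * y.2) • (x.1 * x.2) from
      funext fun x => by rw [hPxy, smul_eq_mul]; ring]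
    exact (isHomogPoly_fst_mul_snd ℝ).const_smul _
  · rw [show (fun y => P x y) = fun y => (x.1 * x.2) • (y.1 * y.2) from
      funext fun y => by rw [hPxy, smul_eq_mul]; ring]
    exact (isHomogPoly_fst_mul_snd ℝ).const_smul _
  · rw [entire_polarization_fst_mul_snd hPxy, hPxy]
    norm_num
end

section
/- If n_i ≠ n_j for some 1 ≤ i ≠ j ≤ m, then the only symmetric (n₁,…,n_m)-homogeneous polynomial P : E^m → F is the zero map. -/
/-!
Fix all variables but the `i`-th. The resulting map `Q : y ↦ P (…, y, …)` is `n i`-homogeneous,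
but by symmetry it is also the map obtained by freeing the `j`-th variable after swapping `i` and
`j`, hence `n j`-homogeneous. Then `2 ^ n i • Q y = Q (2 • y) = 2 ^ n j • Q y` forces `Q = 0`.
-/

open scoped BigOperators

section Homogeneous

variable {𝕂 : Type*} [RCLike 𝕂] {E F : Type*} [AddCommGroup E] [Module 𝕂 E]
  [AddCommGroup F] [Module 𝕂 F]

theorem IsHomogPoly.map_smul_s13 {m : ℕ} {Q : E → F} (hQ : IsHomogPoly 𝕂 m Q) (t : 𝕂) (x : E) :
    Q (t • x) = t ^ m • Q x := by
  obtain ⟨A, hA⟩ := hQ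
  rw [hA, hA]
  simpa using A.map_smul_univ (fun _ => t) (fun _ => x)

theorem IsHomogPoly.eq_zero_of_ne {a b : ℕ} {Q : E → F} (ha : IsHomogPoly 𝕂 a Q)
    (hb : IsHomogPoly 𝕂 b Q) (hab : a ≠ b) (x : E) : Q x = 0 := by
  have hpow : (2 : 𝕂) ^ a - (2 : 𝕂) ^ b ≠ 0 := by
    rw [sub_ne_zero]
    exact_mod_cast (Nat.pow_right_injective le_rfl).ne hab
  have hsmul : ((2 : 𝕂) ^ a - (2 : 𝕂) ^ b) • Q x = 0 := by
    rw [sub_smul, ← ha.map_smul_s13, ← hb.map_smul_s13, sub_self]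
  exact (smul_eq_zero.mp hsmul).resolve_left hpow

end Homogeneous

theorem IsSymm'.apply_update_eq {E F : Type*} {m : ℕ} {P : (Fin m → E) → F} (hP : IsSymm' P)
    (σ : Equiv.Perm (Fin m)) (x : Fin m → E) (i : Fin m) (v : E) :
    P (Function.update x i v) = P (Function.update (x ∘ σ) (σ.symm i) v) := by
  rw [← hP σ, Function.update_comp_equiv]

theorem symm_multipoly_eq_zero_of_ne_general {𝕂 : Type*} [RCLike 𝕂] {E F : Type*}
    [AddCommGroup E] [Module 𝕂 E] [AddCommGroup F] [Module 𝕂 F]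
    {m : ℕ} (n : Fin m → ℕ) {i j : Fin m} (hn : n i ≠ n j)
    (P : (Fin m → E) → F) (hsym : IsSymm' P) (hP : IsMultiPoly 𝕂 n P) :
    ∀ x : Fin m → E, P x = 0 := by
  intro x
  have hQj : IsHomogPoly 𝕂 (n j) fun y => P (Function.update x i y) := by
    convert hP j (x ∘ Equiv.swap i j) using 2 with y
    rw [hsym.apply_update_eq (Equiv.swap i j), Equiv.symm_swap, Equiv.swap_apply_left]
  simpa using (hP i x).eq_zero_of_ne hQj hn (x i)

/-- If `n_i ≠ n_j` for some `i ≠ j`, then the only symmetric `(n₁, …, n_m)`-homogeneous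
polynomial `P : E^m → F` is the zero map. -/
theorem symm_multipoly_eq_zero_of_ne {𝕂 : Type*} [RCLike 𝕂] {E F : Type*}
    [AddCommGroup E] [Module 𝕂 E] [AddCommGroup F] [Module 𝕂 F]
    {m : ℕ} (n : Fin m → ℕ) {i j : Fin m} (hij : i ≠ j) (hn : n i ≠ n j)
    (P : (Fin m → E) → F) (hsym : IsSymm' P) (hP : IsMultiPoly 𝕂 n P) :
    ∀ x : Fin m → E, P x = 0 :=
  symm_multipoly_eq_zero_of_ne_general n hn P hsym hP
end

section
/- For all natural numbers n ≥ 1 and r with 0 ≤ r ≤ n: Σ_{δ∈{±1}ⁿ} δ₁⋯δₙ·(δ₁+⋯+δₙ)^r equals 0 if r < n, and equals n!·2ⁿ if r = n. -/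
/-!
Summing over the first sign replaces `f` by `f (· + 1) - f (· - 1)`, so the sum of
`δ₁ ⋯ δₙ f (x + δ₁ + ⋯ + δₙ)` is the `n`-th forward difference of step `2` of `f` at `x - n`.
The substitution `y = 2 z - n` turns `y ^ r` into a polynomial in `z` of degree `r` with leading
coefficient `2 ^ r`, whose `n`-th unit forward difference is `0` for `r < n` and `n! 2ⁿ` for `r = n`.
-/

open Finset Function Polynomial fwdDiff

theorem fwdDiff_iter_comp_addMonoidHom {M M' G : Type*} [AddCommMonoid M] [AddCommMonoid M']
    [AddCommGroup G] (φ : M →+ M') (f : M' → G) (h : M) (n : ℕ) (y : M) :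
    Δ_[h] ^[n] (f ∘ φ) y = Δ_[φ h] ^[n] f (φ y) := by
  simp [fwdDiff_iter_eq_sum_shift]

section CommRing

variable {R : Type*} [CommRing R]

theorem fwdDiff_iter_pow_apply_eq_fwdDiff_one_iter_eval (h y : R) (n r : ℕ) :
    Δ_[h] ^[n] (· ^ r) y = Δ_[1] ^[n] ((C h * X + C y) ^ r).eval 0 := by
  have hP : ((C h * X + C y) ^ r).eval = (fun z => (z + y) ^ r) ∘ AddMonoidHom.mulLeft h := by
    ext z
    simp
  rw [hP, fwdDiff_iter_comp_addMonoidHom, AddMonoidHom.coe_mulLeft, mul_one, mul_zero,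
    fwdDiff_iter_comp_add h (· ^ r), zero_add]

theorem fwdDiff_iter_pow_apply_eq_zero_of_lt (h y : R) {n r : ℕ} (hr : r < n) :
    Δ_[h] ^[n] (· ^ r) y = 0 := by
  rw [fwdDiff_iter_pow_apply_eq_fwdDiff_one_iter_eval, fwdDiff_iter_eq_zero_of_degree_lt,
    Pi.zero_apply]
  exact (natDegree_pow_le_of_le r natDegree_linear_le).trans_lt (by omega)

theorem fwdDiff_iter_pow_self_apply [NoZeroDivisors R] {h : R} (hh : h ≠ 0) (y : R) (n : ℕ) :
    Δ_[h] ^[n] (· ^ n) y = n.factorial * h ^ n := by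
  have hdeg : ((C h * X + C y) ^ n).natDegree = n := by
    rw [natDegree_pow, natDegree_linear hh, mul_one]
  have hfac := congr_fun ((C h * X + C y) ^ n).fwdDiff_iter_degree_eq_factorial 0
  rw [hdeg, leadingCoeff_pow, leadingCoeff_linear hh] at hfac
  rw [fwdDiff_iter_pow_apply_eq_fwdDiff_one_iter_eval, hfac]
  simp [mul_comm]

end CommRing

theorem sum_units_int {G : Type*} [AddCommMonoid G] (f : ℤˣ → G) :
    ∑ u : ℤˣ, f u = f 1 + f (-1) := by
  rw [show (univ : Finset ℤˣ) = {1, -1} from rfl, sum_pair (by decide)]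

theorem sum_signs_smul_eq_fwdDiff_iter {G : Type*} [AddCommGroup G] (f : ℤ → G) (n : ℕ)
    (x : ℤ) :
    ∑ δ : Fin n → ℤˣ, (∏ k, (δ k : ℤ)) • f (x + ∑ k, (δ k : ℤ)) = Δ_[2] ^[n] f (x - n) := by
  induction n generalizing x with
  | zero => simp
  | succ n ih =>
    rw [← (Fin.consEquiv fun _ => ℤˣ).sum_comp, Fintype.sum_prod_type, sum_units_int]
    simp only [Fin.consEquiv_apply, Fin.prod_univ_succ, Fin.sum_univ_succ, Fin.cons_zero,
      Fin.cons_succ, Units.val_one, Units.val_neg, one_mul, neg_mul, neg_smul, sum_neg_distrib,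
      ← add_assoc, ih, iterate_succ_apply', fwdDiff, ← sub_eq_add_neg]
    rw [Nat.cast_succ, show x - (n + 1) + 2 = x + 1 - n by ring,
      show x - (n + 1) = x - 1 - n by ring]

theorem sum_signs_pow_general (n r : ℕ) (hr : r ≤ n) :
    (∑ δ : Fin n → ℤˣ, (∏ k : Fin n, (δ k : ℤ)) * (∑ k : Fin n, (δ k : ℤ)) ^ r) =
      if r < n then 0 else (n.factorial : ℤ) * 2 ^ n := by
  have hsum := sum_signs_smul_eq_fwdDiff_iter (· ^ r) n 0
  simp only [smul_eq_mul, zero_add] at hsum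
  rw [hsum]
  split_ifs with hrn
  · exact fwdDiff_iter_pow_apply_eq_zero_of_lt 2 _ hrn
  · obtain rfl : r = n := by omega
    exact fwdDiff_iter_pow_self_apply two_ne_zero _ r

/-- For `1 ≤ n` and `0 ≤ r ≤ n`,
`∑_{δ ∈ {±1}ⁿ} δ₁ ⋯ δₙ (δ₁ + ⋯ + δₙ)^r` equals `0` if `r < n` and equals `n! 2ⁿ` if `r = n`. -/
theorem sum_signs_pow (n r : ℕ) (hn : 1 ≤ n) (hr : r ≤ n) :
    (∑ δ : Fin n → ℤˣ, (∏ k : Fin n, (δ k : ℤ)) * (∑ k : Fin n, (δ k : ℤ)) ^ r) =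
      if r < n then 0 else (n.factorial : ℤ) * 2 ^ n :=
  sum_signs_pow_general n r hr
end
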